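/- Assume Σ_{n=2}^∞ Ξ(n)·aₙ ≤ (A−B)(1−γ), that Ξ(2) > 0, and that Ξ(n) ≥ Ξ(2) for all n ≥ 2. Let δ > 0 and define ℱ(z) = z − Σ_{n=2}^∞ (Γ(μn+1)Γ(2+δ)/Γ(μn+1+δ)) aₙ z^{μn} (so that ℱ(z) = Γ(2+δ) z^{−δ} · I_z^δ F_μ(z), the normalized Srivastava–Owa fractional integral of F_μ of order δ). Set K = (Γ(2μ+1)Γ(2+δ)/Γ(2μ+1+δ)) · (A−B)(1−γ)/Ξ(2). Then for every z ∈ 𝕌, |z| − K·|z|^{2μ} ≤ |ℱ(z)| ≤ |z| + K·|z|^{2μ}. -/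

import Mathlib

open Complex

/-- `Ξ(n) = (1−B)((μn)^k ϑₙ − (μn)^m λₙ) + (A−B)(1−γ)(μn)^m λₙ`. -/
noncomputable def Xi (μ A B γ : ℝ) (k m : ℕ) (ϑ lam : ℕ → ℝ) (n : ℕ) : ℝ :=
  (1 - B) * ((μ * n) ^ k * ϑ n - (μ * n) ^ m * lam n) +
    (A - B) * (1 - γ) * ((μ * n) ^ m * lam n)


/-- The normalized Srivastava–Owa fractional integral of `F_μ` of order `δ`:
`ℱ(z) = Γ(2+δ) z^{−δ} I_z^δ F_μ(z) = z − Σ_{n≥2} (Γ(μn+1)Γ(2+δ)/Γ(μn+1+δ)) aₙ z^{μn}`. -/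
noncomputable def fracIntF (μ δ : ℝ) (a : ℕ → ℝ) (z : ℂ) : ℂ :=
  z - ∑' n : ℕ,
    ((Real.Gamma (μ * (n + 2 : ℕ) + 1) * Real.Gamma (2 + δ) /
        Real.Gamma (μ * (n + 2 : ℕ) + 1 + δ) * a (n + 2) : ℝ) : ℂ) *
      z ^ ((μ * (n + 2 : ℕ) : ℝ) : ℂ)

/-!
Since `Ξ(n) ≥ Ξ(2) > 0`, the coefficient condition bounds `Σ aₙ` by `(A−B)(1−γ)/Ξ(2)`.
Log-convexity of `Γ` makes `x ↦ Γ(x+1)/Γ(x+1+δ)` decreasing, so each coefficient of `ℱ` is at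
most `Γ(2μ+1)Γ(2+δ)/Γ(2μ+1+δ) · aₙ`, while `|z|^{μn} ≤ |z|^{2μ}` on the disc. Hence
`|ℱ(z) − z| ≤ K|z|^{2μ}`, and the triangle inequality gives both bounds.
-/

open Set

theorem ConvexOn.map_add_sub_le_map_add_sub {s : Set ℝ} {f : ℝ → ℝ} (hf : ConvexOn ℝ s f)
    {a b d : ℝ} (ha : a ∈ s) (hbd : b + d ∈ s) (hab : a ≤ b) (hd : 0 ≤ d) :
    f (a + d) - f a ≤ f (b + d) - f b := by
  obtain rfl | hd := hd.eq_or_lt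
  · simp
  have hmem : ∀ x ∈ Icc a (b + d), x ∈ s := fun x hx => hf.1.ordConnected.out ha hbd hx
  have hb : b ∈ s := hmem b ⟨hab, by linarith⟩
  have had : a + d ∈ s := hmem (a + d) ⟨by linarith, by linarith⟩
  have key : slope f a (a + d) ≤ slope f b (b + d) :=
    calc slope f a (a + d)
        ≤ slope f a (b + d) :=
          hf.slope_mono ha ⟨had, by simp [hd.ne']⟩ ⟨hbd, by simp; linarith⟩ (by linarith)
      _ = slope f (b + d) a := slope_comm _ _ _
      _ ≤ slope f (b + d) b :=
          hf.slope_mono hbd ⟨ha, by simp; linarith⟩ ⟨hb, by simp [hd.ne']⟩ hab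
      _ = slope f b (b + d) := slope_comm _ _ _
  simpa [slope_def_field, div_le_div_iff_of_pos_right hd] using key

theorem Real.Gamma_add_mul_Gamma_le {a b d : ℝ} (ha : 0 < a) (hab : a ≤ b) (hd : 0 ≤ d) :
    Real.Gamma (a + d) * Real.Gamma b ≤ Real.Gamma a * Real.Gamma (b + d) := by
  have hb : 0 < b := ha.trans_le hab
  have hlog := Real.convexOn_log_Gamma.map_add_sub_le_map_add_sub (mem_Ioi.2 ha)
    (mem_Ioi.2 (by linarith : 0 < b + d)) hab hd
  simp only [Function.comp_apply] at hlog
  have h1 := Real.Gamma_pos_of_pos (by linarith : 0 < a + d)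
  have h2 := Real.Gamma_pos_of_pos hb
  have h3 := Real.Gamma_pos_of_pos ha
  have h4 := Real.Gamma_pos_of_pos (by linarith : 0 < b + d)
  rw [← Real.log_le_log_iff (by positivity) (by positivity), Real.log_mul h1.ne' h2.ne',
    Real.log_mul h3.ne' h4.ne']
  linarith

noncomputable def fracIntCoeff (δ x : ℝ) : ℝ :=
  Real.Gamma (x + 1) * Real.Gamma (2 + δ) / Real.Gamma (x + 1 + δ)

lemma fracIntCoeff_nonneg {δ x : ℝ} (hδ : 0 ≤ δ) (hx : 0 ≤ x) : 0 ≤ fracIntCoeff δ x := by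
  unfold fracIntCoeff
  have := Real.Gamma_pos_of_pos (by linarith : 0 < x + 1)
  have := Real.Gamma_pos_of_pos (by linarith : 0 < 2 + δ)
  have := Real.Gamma_pos_of_pos (by linarith : 0 < x + 1 + δ)
  positivity

lemma fracIntCoeff_antitoneOn {δ : ℝ} (hδ : 0 ≤ δ) : AntitoneOn (fracIntCoeff δ) (Ici 0) := by
  intro x hx y hy hxy
  have hx1 : 0 < x + 1 := by linarith [mem_Ici.1 hx]
  have hy1 : 0 < y + 1 := by linarith [mem_Ici.1 hy]
  unfold fracIntCoeff
  rw [div_le_div_iff₀ (Real.Gamma_pos_of_pos (by linarith)) (Real.Gamma_pos_of_pos (by linarith))]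
  have hcross := Real.Gamma_add_mul_Gamma_le hx1 (by linarith : x + 1 ≤ y + 1) hδ
  have := (Real.Gamma_pos_of_pos (by linarith : 0 < 2 + δ)).le
  calc Real.Gamma (y + 1) * Real.Gamma (2 + δ) * Real.Gamma (x + 1 + δ)
      = Real.Gamma (2 + δ) * (Real.Gamma (x + 1 + δ) * Real.Gamma (y + 1)) := by ring
    _ ≤ Real.Gamma (2 + δ) * (Real.Gamma (x + 1) * Real.Gamma (y + 1 + δ)) := by gcongr
    _ = Real.Gamma (x + 1) * Real.Gamma (2 + δ) * Real.Gamma (y + 1 + δ) := by ring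

lemma summable_and_tsum_le_of_tsum_mul_le {w a : ℕ → ℝ} {w₀ C : ℝ} (hw₀ : 0 < w₀)
    (hw : ∀ n, w₀ ≤ w n) (ha : ∀ n, 0 ≤ a n) (hs : Summable fun n => w n * a n)
    (hC : ∑' n, w n * a n ≤ C) : Summable a ∧ ∑' n, a n ≤ C / w₀ := by
  have hle : ∀ n, a n ≤ w n * a n / w₀ := fun n => by
    rw [le_div_iff₀ hw₀]
    nlinarith [hw n, ha n]
  have hsa : Summable a := (hs.div_const w₀).of_nonneg_of_le ha hle
  refine ⟨hsa, ?_⟩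
  calc ∑' n, a n ≤ ∑' n, w n * a n / w₀ := hsa.tsum_le_tsum hle (hs.div_const w₀)
    _ = (∑' n, w n * a n) / w₀ := tsum_div_const
    _ ≤ C / w₀ := by gcongr

lemma norm_sub_fracIntF_le {μ δ : ℝ} {a : ℕ → ℝ} {s : ℝ} {z : ℂ} (hμ : 0 ≤ μ) (hδ : 0 ≤ δ)
    (ha : ∀ n, 0 ≤ a (n + 2)) (hs : HasSum (fun n => a (n + 2)) s) (hz : ‖z‖ ≤ 1) :
    ‖z - fracIntF μ δ a z‖ ≤ fracIntCoeff δ (2 * μ) * s * ‖z‖ ^ (2 * μ) := by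
  rw [fracIntF, sub_sub_cancel]
  refine tsum_of_norm_bounded ((hs.mul_left (fracIntCoeff δ (2 * μ))).mul_right _) fun n => ?_
  have hexp : 2 * μ ≤ μ * (n + 2 : ℕ) := by push_cast; nlinarith [n.cast_nonneg (α := ℝ)]
  have hcoeff : fracIntCoeff δ (μ * (n + 2 : ℕ)) ≤ fracIntCoeff δ (2 * μ) :=
    fracIntCoeff_antitoneOn hδ (mem_Ici.2 (by positivity)) (mem_Ici.2 (by positivity)) hexp
  change ‖((fracIntCoeff δ (μ * (n + 2 : ℕ)) * a (n + 2) : ℝ) : ℂ) * _‖ ≤ _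
  rw [norm_mul, Complex.norm_real, norm_cpow_real,
    Real.norm_of_nonneg (mul_nonneg (fracIntCoeff_nonneg hδ (by positivity)) (ha n))]
  exact mul_le_mul (mul_le_mul_of_nonneg_right hcoeff (ha n))
    (Real.rpow_le_rpow_of_exponent_ge' (norm_nonneg z) hz (by positivity) hexp) (by positivity)
    (mul_nonneg (fracIntCoeff_nonneg hδ (by positivity)) (ha n))

theorem stmt14_general (μ A B γ δ : ℝ) (k m : ℕ) (a ϑ lam : ℕ → ℝ)
    (hμ : 1 ≤ μ) (hδ : 0 < δ)
    (ha : ∀ n, 2 ≤ n → 0 ≤ a n)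
    (hsum : Summable fun n : ℕ => Xi μ A B γ k m ϑ lam (n + 2) * a (n + 2))
    (hle : (∑' n : ℕ, Xi μ A B γ k m ϑ lam (n + 2) * a (n + 2)) ≤ (A - B) * (1 - γ))
    (hXi2 : 0 < Xi μ A B γ k m ϑ lam 2)
    (hmono : ∀ n, 2 ≤ n → Xi μ A B γ k m ϑ lam 2 ≤ Xi μ A B γ k m ϑ lam n) :
    ∀ z : ℂ, ‖z‖ < 1 →
      ‖z‖ -
          Real.Gamma (2 * μ + 1) * Real.Gamma (2 + δ) / Real.Gamma (2 * μ + 1 + δ) *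
            ((A - B) * (1 - γ) / Xi μ A B γ k m ϑ lam 2) * ‖z‖ ^ (2 * μ) ≤
        ‖fracIntF μ δ a z‖ ∧
      ‖fracIntF μ δ a z‖ ≤
        ‖z‖ +
          Real.Gamma (2 * μ + 1) * Real.Gamma (2 + δ) / Real.Gamma (2 * μ + 1 + δ) *
            ((A - B) * (1 - γ) / Xi μ A B γ k m ϑ lam 2) * ‖z‖ ^ (2 * μ) := by
  intro z hz
  have ha₂ : ∀ n, 0 ≤ a (n + 2) := fun n => ha _ (by omega)
  obtain ⟨hsa, htsa⟩ := summable_and_tsum_le_of_tsum_mul_le hXi2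
    (fun n => hmono _ (by omega)) ha₂ hsum hle
  have hdist : ‖z - fracIntF μ δ a z‖ ≤
      fracIntCoeff δ (2 * μ) * ((A - B) * (1 - γ) / Xi μ A B γ k m ϑ lam 2) * ‖z‖ ^ (2 * μ) :=
    calc ‖z - fracIntF μ δ a z‖
        ≤ fracIntCoeff δ (2 * μ) * (∑' n, a (n + 2)) * ‖z‖ ^ (2 * μ) :=
          norm_sub_fracIntF_le (by linarith) hδ.le ha₂ hsa.hasSum hz.le
      _ ≤ _ := by
          have := fracIntCoeff_nonneg hδ.le (by linarith : 0 ≤ 2 * μ)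
          gcongr
  obtain ⟨hlower, hupper⟩ := abs_le.1 ((abs_norm_sub_norm_le z (fracIntF μ δ a z)).trans hdist)
  exact ⟨by unfold fracIntCoeff at hupper; linarith, by unfold fracIntCoeff at hlower; linarith⟩

/-- distortion theorem for the fractional integral, Theorem 3.1 of the
paper: if `Σ_{n≥2} Ξ(n)aₙ ≤ (A−B)(1−γ)`, `Ξ(2) > 0`, `Ξ(n) ≥ Ξ(2)` for `n ≥ 2` and
`δ > 0`, then with `K = (Γ(2μ+1)Γ(2+δ)/Γ(2μ+1+δ))·(A−B)(1−γ)/Ξ(2)` one has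
`|z| − K|z|^{2μ} ≤ |ℱ(z)| ≤ |z| + K|z|^{2μ}` on 𝕌. -/
theorem stmt14 (μ A B γ δ : ℝ) (k m : ℕ) (a ϑ lam : ℕ → ℝ)
    (hμ : 1 ≤ μ) (hkm : m ≤ k)
    (hB : -1 ≤ B) (hBA : B < A) (hA : A ≤ 1) (hB0 : B < 0)
    (hγ0 : 0 ≤ γ) (hγ1 : γ < 1) (hδ : 0 < δ)
    (ha : ∀ n, 2 ≤ n → 0 ≤ a n)
    (hlam : ∀ n, 2 ≤ n → 0 ≤ lam n) (hϑ : ∀ n, 2 ≤ n → lam n ≤ ϑ n)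
    (hsum : Summable fun n : ℕ => Xi μ A B γ k m ϑ lam (n + 2) * a (n + 2))
    (hle : (∑' n : ℕ, Xi μ A B γ k m ϑ lam (n + 2) * a (n + 2)) ≤ (A - B) * (1 - γ))
    (hXi2 : 0 < Xi μ A B γ k m ϑ lam 2)
    (hmono : ∀ n, 2 ≤ n → Xi μ A B γ k m ϑ lam 2 ≤ Xi μ A B γ k m ϑ lam n) :
    ∀ z : ℂ, ‖z‖ < 1 →
      ‖z‖ -
          Real.Gamma (2 * μ + 1) * Real.Gamma (2 + δ) / Real.Gamma (2 * μ + 1 + δ) *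
            ((A - B) * (1 - γ) / Xi μ A B γ k m ϑ lam 2) * ‖z‖ ^ (2 * μ) ≤
        ‖fracIntF μ δ a z‖ ∧
      ‖fracIntF μ δ a z‖ ≤
        ‖z‖ +
          Real.Gamma (2 * μ + 1) * Real.Gamma (2 + δ) / Real.Gamma (2 * μ + 1 + δ) *
            ((A - B) * (1 - γ) / Xi μ A B γ k m ϑ lam 2) * ‖z‖ ^ (2 * μ) :=
  stmt14_general μ A B γ δ k m a ϑ lam hμ hδ ha hsum hle hXi2 hmono
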